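/- Let Γ be the first Grigorchuk group with generators a, b, c, d. The element g_1 = (ab)^2 d^{-1} (ab)^{-2} d acts trivially on the first level of the binary tree and acts as (1, (ab)^2) beyond level 1; more generally, there is a constant C such that for each k there is an element g_k of Γ of word length at most C·2^k that acts trivially on the first k levels of the rooted binary tree but is nontrivial, i.e., g_k ≠ 1. -/

import Mathlib

/-- The generator `a`: flip the first letter. -/
def aFun : List Bool → List Bool
  | [] => []
  | x :: xs => (!x) :: xs

mutual
/-- The generator `b` of the first Grigorchuk group, `b = (a, c)`. -/
def bFun : List Bool → List Bool
  | [] => []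
  | false :: xs => false :: aFun xs
  | true :: xs => true :: cFun xs
/-- The generator `c` of the first Grigorchuk group, `c = (a, d)`. -/
def cFun : List Bool → List Bool
  | [] => []
  | false :: xs => false :: aFun xs
  | true :: xs => true :: dFun xs
/-- The generator `d` of the first Grigorchuk group, `d = (1, b)`. -/
def dFun : List Bool → List Bool
  | [] => []
  | false :: xs => false :: xs
  | true :: xs => true :: bFun xs
end

theorem aFun_inv : Function.Involutive aFun := by
  intro l; cases l <;> simp [aFun]

theorem bcd_inv : ∀ l : List Bool, bFun (bFun l) = l ∧ cFun (cFun l) = l ∧ dFun (dFun l) = l := by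
  intro l
  induction l with
  | nil => simp [bFun, cFun, dFun]
  | cons x xs ih =>
    cases x <;> simp [bFun, cFun, dFun, aFun_inv xs, ih.1, ih.2.1, ih.2.2]

/-- The automorphism `a` of the rooted binary tree. -/
def aP : Equiv.Perm (List Bool) := Function.Involutive.toPerm aFun aFun_inv
/-- The automorphism `b` of the rooted binary tree. -/
def bP : Equiv.Perm (List Bool) := Function.Involutive.toPerm bFun (fun l => (bcd_inv l).1)
/-- The automorphism `c` of the rooted binary tree. -/
def cP : Equiv.Perm (List Bool) := Function.Involutive.toPerm cFun (fun l => (bcd_inv l).2.1)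
/-- The automorphism `d` of the rooted binary tree. -/
def dP : Equiv.Perm (List Bool) := Function.Involutive.toPerm dFun (fun l => (bcd_inv l).2.2)

/-- The first Grigorchuk group `Γ = ⟨a, b, c, d⟩ ≤ Aut(T)`. -/
def Grigorchuk : Subgroup (Equiv.Perm (List Bool)) :=
  Subgroup.closure {aP, bP, cP, dP}

/-- `g` has word length at most `n` with respect to the generating set `S`. -/
def wordLenLE {G : Type*} [Group G] (S : Set G) (n : ℕ) (g : G) : Prop :=
  ∃ l : List G, l.length ≤ n ∧ (∀ x ∈ l, x ∈ S ∨ x⁻¹ ∈ S) ∧ l.prod = g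


/-! ### Auxiliary development -/

@[simp] lemma aP_apply (l : List Bool) : aP l = aFun l := rfl
@[simp] lemma bP_apply (l : List Bool) : bP l = bFun l := rfl
@[simp] lemma cP_apply (l : List Bool) : cP l = cFun l := rfl
@[simp] lemma dP_apply (l : List Bool) : dP l = dFun l := rfl
@[simp] lemma aP_inv : aP⁻¹ = aP := rfl
@[simp] lemma bP_inv : bP⁻¹ = bP := rfl
@[simp] lemma cP_inv : cP⁻¹ = cP := rfl
@[simp] lemma dP_inv : dP⁻¹ = dP := rfl

lemma klein : ∀ l : List Bool, bFun (cFun l) = dFun l ∧ cFun (bFun l) = dFun l ∧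
    cFun (dFun l) = bFun l ∧ dFun (cFun l) = bFun l ∧
    dFun (bFun l) = cFun l ∧ bFun (dFun l) = cFun l := by
  intro l
  induction l with
  | nil => simp [bFun, cFun, dFun]
  | cons x xs ih =>
    cases x <;>
      simp [bFun, cFun, dFun, aFun_inv xs, ih.1, ih.2.1, ih.2.2.1, ih.2.2.2.1,
        ih.2.2.2.2.1, ih.2.2.2.2.2]

/-- `(ab)²` acting on a list beginning with `false`. -/
lemma t_false (l : List Bool) : ((aP * bP) ^ 2) (false :: l) = false :: cFun (aFun l) := by
  simp [pow_two, Equiv.Perm.mul_apply, aFun, bFun]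

/-- `(ab)²` acting on a list beginning with `true`. -/
lemma t_true (l : List Bool) : ((aP * bP) ^ 2) (true :: l) = true :: aFun (cFun l) := by
  simp [pow_two, Equiv.Perm.mul_apply, aFun, bFun]

lemma t_apply (l : List Bool) :
    ((aP * bP) ^ 2) l = aFun (bFun (aFun (bFun l))) := by
  simp [pow_two, Equiv.Perm.mul_apply]

lemma tinv_eq : ((aP * bP) ^ 2)⁻¹ = bP * aP * bP * aP := by
  simp [pow_two, mul_inv_rev, mul_assoc]

lemma tinv_false (l : List Bool) : ((aP * bP) ^ 2)⁻¹ (false :: l) = false :: aFun (cFun l) := by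
  simp [tinv_eq, Equiv.Perm.mul_apply, aFun, bFun]

lemma tinv_true (l : List Bool) : ((aP * bP) ^ 2)⁻¹ (true :: l) = true :: cFun (aFun l) := by
  simp [tinv_eq, Equiv.Perm.mul_apply, aFun, bFun]

/-- The conjugator sequence `d, c, b, d, c, b, …`. -/
def conjSeq (k : ℕ) : Equiv.Perm (List Bool) :=
  if k % 3 = 0 then dP else if k % 3 = 1 then cP else bP

lemma conjSeq_inv (k : ℕ) : (conjSeq k)⁻¹ = conjSeq k := by
  unfold conjSeq; split <;> [skip; split] <;> simp

lemma conjSeq_cases (k : ℕ) :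
    (conjSeq k = dP ∧ conjSeq (k + 1) = cP) ∨
    (conjSeq k = cP ∧ conjSeq (k + 1) = bP) ∨
    (conjSeq k = bP ∧ conjSeq (k + 1) = dP) := by
  have h : k % 3 = 0 ∨ k % 3 = 1 ∨ k % 3 = 2 := by omega
  rcases h with h | h | h
  · left; have h1 : (k + 1) % 3 = 1 := by omega
    constructor <;> simp [conjSeq, h, h1]
  · right; left; have h1 : (k + 1) % 3 = 2 := by omega
    constructor <;> simp [conjSeq, h, h1]
  · right; right; have h1 : (k + 1) % 3 = 0 := by omega
    constructor <;> simp [conjSeq, h, h1]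

/-- The recursive family `g₀ = (ab)²`, `g_{k+1} = g_k x_k g_k⁻¹ x_k`. -/
def gg : ℕ → Equiv.Perm (List Bool)
  | 0 => (aP * bP) ^ 2
  | k + 1 => gg k * conjSeq k * (gg k)⁻¹ * conjSeq k

lemma gg_nil : ∀ k, gg k [] = [] := by
  intro k
  induction k with
  | zero => simp [gg, pow_two, Equiv.Perm.mul_apply, aFun, bFun]
  | succ k ih =>
    have hc : conjSeq k [] = [] := by
      unfold conjSeq; split <;> [skip; split] <;> simp [bFun, cFun, dFun]
    have hinv : (gg k)⁻¹ [] = [] := by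
      nth_rewrite 1 [← ih]
      exact (gg k).symm_apply_apply []
    simp [gg, Equiv.Perm.mul_apply, hc, hinv, ih]

lemma gg_action : ∀ k, ∀ l : List Bool,
    gg (k + 1) (false :: l) = false :: l ∧ gg (k + 1) (true :: l) = true :: gg k l := by
  intro k
  induction k with
  | zero =>
    intro l
    have h0 : conjSeq 0 = dP := rfl
    constructor
    · show (gg 0 * conjSeq 0 * (gg 0)⁻¹ * conjSeq 0) (false :: l) = false :: l
      simp only [h0, gg, Equiv.Perm.mul_apply, dP_apply, dFun, tinv_false, t_false]
      rw [aFun_inv, (bcd_inv l).2.1]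
    · show (gg 0 * conjSeq 0 * (gg 0)⁻¹ * conjSeq 0) (true :: l) = true :: ((aP * bP) ^ 2) l
      simp only [h0, gg, Equiv.Perm.mul_apply, dP_apply, dFun, tinv_true, t_true]
      rw [t_apply l]
      congr 1
      rw [(klein (aFun (bFun l))).1, (klein (aFun (bFun l))).2.2.1]
  | succ k ih =>
    intro l
    have hfinv : ∀ m : List Bool, (gg (k + 1))⁻¹ (false :: m) = false :: m := by
      intro m
      conv_lhs => rw [← (ih m).1]
      exact (gg (k + 1)).symm_apply_apply _
    have htinv : ∀ m : List Bool, (gg (k + 1))⁻¹ (true :: m) = true :: (gg k)⁻¹ m := by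
      intro m
      have := (ih ((gg k)⁻¹ m)).2
      rw [show gg k ((gg k)⁻¹ m) = m from (gg k).apply_symm_apply m] at this
      conv_lhs => rw [← this]
      exact (gg (k + 1)).symm_apply_apply _
    rcases conjSeq_cases k with ⟨hk, hk1⟩ | ⟨hk, hk1⟩ | ⟨hk, hk1⟩
    · -- conjSeq k = dP, conjSeq (k+1) = cP ; sections of c are (a, d)
      constructor
      · show (gg (k+1) * conjSeq (k+1) * (gg (k+1))⁻¹ * conjSeq (k+1)) (false :: l) = false :: l
        simp only [hk1, Equiv.Perm.mul_apply, cP_apply, cFun, hfinv, (ih _).1]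
        rw [aFun_inv]
      · show (gg (k+1) * conjSeq (k+1) * (gg (k+1))⁻¹ * conjSeq (k+1)) (true :: l)
            = true :: gg (k + 1) l
        simp only [hk1, Equiv.Perm.mul_apply, cP_apply, cFun, htinv, (ih _).2]
        congr 1
        show gg k (dFun ((gg k)⁻¹ (dFun l))) = gg (k + 1) l
        show gg k (dFun ((gg k)⁻¹ (dFun l)))
            = (gg k * conjSeq k * (gg k)⁻¹ * conjSeq k) l
        simp [hk, Equiv.Perm.mul_apply]
    · -- conjSeq k = cP, conjSeq (k+1) = bP ; sections of b are (a, c)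
      constructor
      · show (gg (k+1) * conjSeq (k+1) * (gg (k+1))⁻¹ * conjSeq (k+1)) (false :: l) = false :: l
        simp only [hk1, Equiv.Perm.mul_apply, bP_apply, bFun, hfinv, (ih _).1]
        rw [aFun_inv]
      · show (gg (k+1) * conjSeq (k+1) * (gg (k+1))⁻¹ * conjSeq (k+1)) (true :: l)
            = true :: gg (k + 1) l
        simp only [hk1, Equiv.Perm.mul_apply, bP_apply, bFun, htinv, (ih _).2]
        congr 1
        show gg k (cFun ((gg k)⁻¹ (cFun l)))
            = (gg k * conjSeq k * (gg k)⁻¹ * conjSeq k) l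
        simp [hk, Equiv.Perm.mul_apply]
    · -- conjSeq k = bP, conjSeq (k+1) = dP ; sections of d are (1, b)
      constructor
      · show (gg (k+1) * conjSeq (k+1) * (gg (k+1))⁻¹ * conjSeq (k+1)) (false :: l) = false :: l
        simp only [hk1, Equiv.Perm.mul_apply, dP_apply, dFun, hfinv, (ih _).1]
      · show (gg (k+1) * conjSeq (k+1) * (gg (k+1))⁻¹ * conjSeq (k+1)) (true :: l)
            = true :: gg (k + 1) l
        simp only [hk1, Equiv.Perm.mul_apply, dP_apply, dFun, htinv, (ih _).2]
        congr 1
        show gg k (bFun ((gg k)⁻¹ (bFun l)))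
            = (gg k * conjSeq k * (gg k)⁻¹ * conjSeq k) l
        simp [hk, Equiv.Perm.mul_apply]

lemma gg_fix : ∀ k, ∀ l : List Bool, l.length ≤ k → gg k l = l := by
  intro k
  induction k with
  | zero => intro l hl; rw [List.length_eq_zero_iff.mp (Nat.le_zero.mp hl)]; exact gg_nil 0
  | succ k ih =>
    intro l hl
    match l with
    | [] => exact gg_nil (k + 1)
    | false :: xs => exact (gg_action k xs).1
    | true :: xs =>
      rw [(gg_action k xs).2, ih xs (by simpa using Nat.succ_le_succ_iff.mp hl)]

lemma gg_witness : ∀ k, gg k (List.replicate k true ++ [false, false])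
    = List.replicate k true ++ [false, true] := by
  intro k
  induction k with
  | zero => simp [gg, pow_two, Equiv.Perm.mul_apply, aFun, bFun, cFun, dFun]
  | succ k ih => simp [List.replicate_succ, (gg_action k _).2, ih]

lemma gg_ne_one (k : ℕ) : gg k ≠ 1 := by
  intro h
  have := gg_witness k
  rw [h] at this
  simp at this

lemma gen_mem : aP ∈ Grigorchuk ∧ bP ∈ Grigorchuk ∧ cP ∈ Grigorchuk ∧ dP ∈ Grigorchuk := by
  refine ⟨?_, ?_, ?_, ?_⟩ <;> apply Subgroup.subset_closure <;> simp

lemma conjSeq_mem (k : ℕ) : conjSeq k ∈ Grigorchuk := by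
  unfold conjSeq; split <;> [skip; split] <;>
    [exact gen_mem.2.2.2; exact gen_mem.2.2.1; exact gen_mem.2.1]

lemma gg_mem (k : ℕ) : gg k ∈ Grigorchuk := by
  induction k with
  | zero =>
    exact pow_mem (mul_mem gen_mem.1 gen_mem.2.1) 2
  | succ k ih =>
    exact mul_mem (mul_mem (mul_mem ih (conjSeq_mem k)) (inv_mem ih)) (conjSeq_mem k)

/-- Words representing `gg k`. -/
def ggWord : ℕ → List (Equiv.Perm (List Bool))
  | 0 => [aP, bP, aP, bP]
  | k + 1 => ggWord k ++ [conjSeq k] ++ (ggWord k).reverse ++ [conjSeq k]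

lemma conjSeq_mem_set (k : ℕ) :
    conjSeq k ∈ ({aP, bP, cP, dP} : Set (Equiv.Perm (List Bool))) := by
  unfold conjSeq; split <;> [skip; split] <;> simp

lemma ggWord_spec : ∀ k, (ggWord k).prod = gg k ∧ (ggWord k).reverse.prod = (gg k)⁻¹ ∧
    ∀ x ∈ ggWord k, x ∈ ({aP, bP, cP, dP} : Set (Equiv.Perm (List Bool))) := by
  intro k
  induction k with
  | zero =>
    refine ⟨?_, ?_, ?_⟩
    · show aP * (bP * (aP * (bP * 1))) = (aP * bP) ^ 2
      simp [pow_two, mul_assoc]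
    · show bP * (aP * (bP * (aP * 1))) = ((aP * bP) ^ 2)⁻¹
      rw [tinv_eq]; simp [mul_assoc]
    · intro x hx
      simp only [ggWord, List.mem_cons, List.not_mem_nil, or_false] at hx
      rcases hx with h | h | h | h <;> subst h <;> simp
  | succ k ih =>
    obtain ⟨hp, hr, hm⟩ := ih
    refine ⟨?_, ?_, ?_⟩
    · show (ggWord k ++ [conjSeq k] ++ (ggWord k).reverse ++ [conjSeq k]).prod = gg (k + 1)
      simp only [List.prod_append, List.prod_cons, List.prod_nil, mul_one, hp, hr]
      show gg k * conjSeq k * (gg k)⁻¹ * conjSeq k = gg (k + 1)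
      rfl
    · show (ggWord k ++ [conjSeq k] ++ (ggWord k).reverse ++ [conjSeq k]).reverse.prod
          = (gg (k + 1))⁻¹
      simp only [List.reverse_append, List.reverse_reverse, List.reverse_cons,
        List.reverse_nil, List.nil_append, List.prod_append, List.prod_cons, List.prod_nil,
        mul_one, List.singleton_append, hp, hr]
      show conjSeq k * (gg k * (conjSeq k * (gg k)⁻¹)) = (gg (k + 1))⁻¹
      show conjSeq k * (gg k * (conjSeq k * (gg k)⁻¹))
          = (gg k * conjSeq k * (gg k)⁻¹ * conjSeq k)⁻¹
      rw [mul_inv_rev, mul_inv_rev, mul_inv_rev, inv_inv, conjSeq_inv]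
    · intro x hx
      simp only [ggWord, List.mem_append, List.mem_reverse, List.mem_cons,
        List.not_mem_nil, or_false] at hx
      rcases hx with ((h | h) | h) | h
      · exact hm x h
      · exact h ▸ conjSeq_mem_set k
      · exact hm x h
      · exact h ▸ conjSeq_mem_set k

lemma ggWord_len : ∀ k, (ggWord k).length + 2 ≤ 6 * 2 ^ k := by
  intro k
  induction k with
  | zero => simp [ggWord]
  | succ k ih =>
    have : (ggWord (k + 1)).length = 2 * (ggWord k).length + 2 := by
      simp [ggWord]; ring
    rw [this, pow_succ]
    omega

/-- The element `g₁ = (ab)² d⁻¹ (ab)⁻² d` of the first Grigorchuk group acts trivially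
on the first level of the binary tree and acts as `(1, (ab)²)` beyond level 1; and
more generally, for each `k` there is a nontrivial element of `Γ` of word length at
most `C · 2 ^ k` acting trivially on the first `k` levels of the tree. -/

theorem grig_stmt14 :
    (∀ l : List Bool, l.length ≤ 1 →
        ((aP * bP) ^ 2 * dP⁻¹ * ((aP * bP) ^ 2)⁻¹ * dP) l = l) ∧
    (∀ l : List Bool,
        ((aP * bP) ^ 2 * dP⁻¹ * ((aP * bP) ^ 2)⁻¹ * dP) (false :: l) = false :: l ∧
        ((aP * bP) ^ 2 * dP⁻¹ * ((aP * bP) ^ 2)⁻¹ * dP) (true :: l)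
          = true :: ((aP * bP) ^ 2) l) ∧
    (∃ C : ℕ, 0 < C ∧ ∀ k : ℕ, ∃ g : Equiv.Perm (List Bool),
        g ∈ Grigorchuk ∧ g ≠ 1 ∧
        wordLenLE ({aP, bP, cP, dP} : Set (Equiv.Perm (List Bool))) (C * 2 ^ k) g ∧
        ∀ l : List Bool, l.length ≤ k → g l = l) := by
  have part2 : ∀ l : List Bool,
      ((aP * bP) ^ 2 * dP⁻¹ * ((aP * bP) ^ 2)⁻¹ * dP) (false :: l) = false :: l ∧
      ((aP * bP) ^ 2 * dP⁻¹ * ((aP * bP) ^ 2)⁻¹ * dP) (true :: l)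
        = true :: ((aP * bP) ^ 2) l := by
    intro l
    have h := gg_action 0 l
    exact ⟨h.1, h.2⟩
  refine ⟨?_, part2, ?_⟩
  · intro l hl
    match l with
    | [] => simpa [gg, conjSeq, Equiv.Perm.mul_apply] using gg_nil 1
    | [false] => simpa using (part2 []).1
    | [true] =>
      have := (part2 []).2
      simpa [pow_two, Equiv.Perm.mul_apply, aFun, bFun] using this
    | x :: y :: xs => simp at hl
  · refine ⟨6, by norm_num, fun k => ⟨gg k, gg_mem k, gg_ne_one k, ?_, gg_fix k⟩⟩
    obtain ⟨hp, _, hm⟩ := ggWord_spec k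
    exact ⟨ggWord k, by have := ggWord_len k; omega, fun x hx => Or.inl (hm x hx), hp⟩
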